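/- arXiv:2110.10284 — 4 statements merged into one kernel-verified Lean document; each statement's English description precedes it below -/
import Mathlib

section
/- Let n ≥ 1 and θ : Fin n → ℝ be nonnegative with ∑ θ i = 1. Define remaining mass S k = 1 - ∑_{i < k} θ i, and suppose S k > 0 for all k < n - 1. Let F₀, …, F_{n-2} be independent Bernoulli bits with P(F_k = true) = θ k / S k. Define C = the least k < n-1 with F_k = true, or n-1 if no such k exists. Then P(C = k) = θ k for every k : Fin n. -/
/-- The remaining probability mass `S k = 1 - ∑_{i < k} θ i`. -/
noncomputable def remMass {n : ℕ} (θ : Fin n → ℝ) (k : ℕ) : ℝ :=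
  1 - ∑ i : Fin n, if (i : ℕ) < k then θ i else 0

/-- Probability weight of an outcome `σ` of the `n - 1` independent Bernoulli
flips, where flip `k` is true with probability `θ k / S k`. -/
noncomputable def seqWeight {n : ℕ} (θ : Fin n → ℝ) (σ : Fin (n - 1) → Bool) : ℝ :=
  ∏ j : Fin (n - 1),
    if σ j then θ (Fin.castLE (Nat.sub_le n 1) j) / remMass θ j.val
    else 1 - θ (Fin.castLE (Nat.sub_le n 1) j) / remMass θ j.val

/-- The index of the first true flip, or the default `d` if all flips are false. -/
def seqOut {m : ℕ} (σ : Fin m → Bool) (d : ℕ) : ℕ :=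
  if h : ∃ k, σ k = true then
    ((Finset.univ.filter fun k => σ k = true).min'
      (by obtain ⟨k, hk⟩ := h
          exact ⟨k, Finset.mem_filter.mpr ⟨Finset.mem_univ _, hk⟩⟩)).val
  else d


/-!
With flip probabilities `p j`, the event `C = k` is the product event "flips `0, …, k - 1` fail
and flip `k` succeeds", so its probability is `p k * ∏_{j < k} (1 - p j)`. For `p j = θ j / S j`
the product telescopes, because `S (j + 1) = S j - θ j`, to `S k`, leaving `θ k`; when no flip
succeeds the probability is `S (n - 1) = θ (n - 1)`, since `S n = 0`.
-/

open Finset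

section FirstSuccess

variable {m : ℕ}

theorem seqOut_self_eq_iff {k : ℕ} (hk : k ≤ m) (σ : Fin m → Bool) :
    seqOut σ m = k ↔ ∀ j : Fin m, ((j : ℕ) < k → σ j = false) ∧ ((j : ℕ) = k → σ j = true) := by
  unfold seqOut
  split_ifs with h
  · generalize_proofs hne
    set μ := (univ.filter fun j => σ j = true).min' hne
    have hμ : σ μ = true := (mem_filter.1 (min'_mem _ hne)).2
    have hμ_le : ∀ j, σ j = true → μ ≤ j := fun j hj => min'_le _ _ (by simpa using hj)
    constructor
    · rintro hμk j
      refine ⟨fun hj => ?_, fun hj => ?_⟩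
      · by_contra hσ
        have := hμ_le j (by simpa using hσ)
        omega
      · rwa [show j = μ from Fin.ext (hj.trans hμk.symm)]
    · intro hP
      have hkμ : k ≤ μ := by
        by_contra hlt
        simp [(hP μ).1 (by omega)] at hμ
      exact le_antisymm (hμ_le ⟨k, by omega⟩ ((hP _).2 rfl)) hkμ
  · push Not at h
    constructor
    · rintro rfl j
      exact ⟨fun _ => by simpa using h j, fun hj => absurd hj j.isLt.ne⟩
    · intro hP
      by_contra hne
      simpa [h] using (hP ⟨k, by omega⟩).2 rfl

theorem prod_range_ite_lt_ite_eq {M : Type*} [CommMonoid M] (a : ℕ → M) (b : M) {k m : ℕ}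
    (hk : k ≤ m) :
    ∏ j ∈ range m, (if j < k then a j else if j = k then b else 1)
      = (∏ j ∈ range k, a j) * if k < m then b else 1 := by
  induction m, hk using Nat.le_induction with
  | base => simp +contextual [prod_congr rfl, mem_range]
  | succ m hkm ih =>
    rw [prod_range_succ, ih]
    rcases hkm.eq_or_lt with rfl | hlt
    · simp
    · simp [hlt, hlt.ne', not_lt_of_gt hlt, Nat.lt_succ_of_lt hlt]

theorem sum_bernoulli_mul_indicator_seqOut_eq (p : ℕ → ℝ) {k : ℕ} (hk : k ≤ m) :
    ∑ σ : Fin m → Bool,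
        (∏ j : Fin m, if σ j then p j else 1 - p j) * (if seqOut σ m = k then 1 else 0)
      = (∏ j ∈ range k, (1 - p j)) * if k < m then p k else 1 := by
  have hfactor : ∀ j : ℕ, ∑ b : Bool,
      (if b then p j else 1 - p j) * (if (j < k → b = false) ∧ (j = k → b = true) then 1 else 0)
        = if j < k then 1 - p j else if j = k then p k else 1 := by
    intro j
    rw [Fintype.sum_bool]
    split_ifs <;> simp_all
  have hindicator : ∀ σ : Fin m → Bool, (if seqOut σ m = k then (1 : ℝ) else 0)
      = ∏ j : Fin m, if ((j : ℕ) < k → σ j = false) ∧ ((j : ℕ) = k → σ j = true) then 1 else 0 := by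
    intro σ
    rw [prod_boole]
    simpa only [mem_univ, forall_const] using if_congr (seqOut_self_eq_iff hk σ) rfl rfl
  simp only [hindicator, ← prod_mul_distrib]
  rw [← Fintype.prod_sum fun (j : Fin m) (b : Bool) => (if b then p j else 1 - p j) *
    (if ((j : ℕ) < k → b = false) ∧ ((j : ℕ) = k → b = true) then 1 else 0)]
  simp only [hfactor]
  rw [Fin.prod_univ_eq_prod_range (fun j => if j < k then 1 - p j else if j = k then p k else 1)]
  exact prod_range_ite_lt_ite_eq _ _ hk

end FirstSuccess

section StickBreaking

variable {n : ℕ} (θ : Fin n → ℝ)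

local notation "θ̃" => Function.extend Fin.val θ 0

theorem remMass_succ (k : ℕ) : remMass θ (k + 1) = remMass θ k - θ̃ k := by
  have hsplit : ∀ i : Fin n, (if (i : ℕ) < k + 1 then θ i else 0)
      = (if (i : ℕ) < k then θ i else 0) + if (i : ℕ) = k then θ̃ i else 0 := by
    intro i
    rw [Fin.val_injective.extend_apply]
    split_ifs <;> first | omega | simp
  have hlast : ∑ i : Fin n, (if (i : ℕ) = k then θ̃ i else 0) = θ̃ k := by
    rw [Fin.sum_univ_eq_sum_range (fun j => if j = k then θ̃ j else 0), sum_ite_eq']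
    split_ifs with hk
    · rfl
    · rw [Function.extend_apply' _ _ _ fun ⟨i, hi⟩ => hk (hi ▸ mem_range.2 i.isLt)]
      rfl
  simp only [remMass, hsplit, sum_add_distrib, hlast]
  ring

theorem remMass_self (hsum : ∑ i, θ i = 1) : remMass θ n = 0 := by
  simp [remMass, hsum]

noncomputable def flipProb (k : ℕ) : ℝ := θ̃ k / remMass θ k

theorem prod_range_one_sub_flipProb {k : ℕ} (hS : ∀ j < k, remMass θ j ≠ 0) :
    ∏ j ∈ range k, (1 - flipProb θ j) = remMass θ k := by
  induction k with
  | zero => simp [remMass]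
  | succ k ih =>
    rw [prod_range_succ, ih fun j hj => hS j (by omega), remMass_succ, flipProb]
    field_simp [hS k k.lt_succ_self]

theorem seqWeight_eq_prod (σ : Fin (n - 1) → Bool) :
    seqWeight θ σ = ∏ j : Fin (n - 1),
      if σ j then flipProb θ j else 1 - flipProb θ j := by
  simp only [seqWeight, flipProb, ← Fin.val_castLE (Nat.sub_le n 1),
    Fin.val_injective.extend_apply]

end StickBreaking

theorem stmt_4_general {n : ℕ} (θ : Fin n → ℝ)
    (hsum : ∑ i, θ i = 1)
    (hS : ∀ k, k < n - 1 → 0 < remMass θ k) :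
    ∀ k : Fin n,
      ∑ σ : Fin (n - 1) → Bool,
        seqWeight θ σ * (if seqOut σ (n - 1) = (k : ℕ) then 1 else 0) = θ k := by
  intro k
  have hk : (k : ℕ) ≤ n - 1 := by omega
  simp only [seqWeight_eq_prod]
  rw [sum_bernoulli_mul_indicator_seqOut_eq _ hk,
    prod_range_one_sub_flipProb θ fun j hj => (hS j (by omega)).ne',
    ← Fin.val_injective.extend_apply θ 0 k]
  split_ifs with hlt
  · exact mul_div_cancel₀ _ (hS k hlt).ne'
  · have hlast : (k : ℕ) + 1 = n := by omega
    have := remMass_succ θ k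
    rw [hlast, remMass_self θ hsum] at this
    linarith

/-- correctness of the sequential (SBK-style) encoding of an
`n`-valued categorical distribution: if `θ` is nonnegative with total mass 1,
the remaining masses `S k` are positive for `k < n - 1`, and `C` is the least
`k < n - 1` whose flip (of parameter `θ k / S k`) is true — or `n - 1` if none —
then `P(C = k) = θ k` for every `k`. -/
theorem stmt_4 {n : ℕ} (hn : 1 ≤ n) (θ : Fin n → ℝ)
    (hθ : ∀ i, 0 ≤ θ i) (hsum : ∑ i, θ i = 1)
    (hS : ∀ k, k < n - 1 → 0 < remMass θ k) :
    ∀ k : Fin n,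
      ∑ σ : Fin (n - 1) → Bool,
        seqWeight θ σ * (if seqOut σ (n - 1) = (k : ℕ) then 1 else 0) = θ k :=
  stmt_4_general θ hsum hS
end

section
/- Let V be a finite set of flip identifiers and w : V → ℝ with 0 ≤ w v ≤ 1. Define the product measure μ on (V → Bool) where coordinate v is Bernoulli(w v). Let i, j ∈ V with i ≠ j and w i = w j, and let f : (V → Bool) → α be a function such that for every assignment σ, f σ does not depend on σ j whenever a predicate P i σ holds, and does not depend on σ i whenever ¬ P i σ holds (i.e. the two flips are never both read, for some path-condition predicate P i not depending on coordinates i and j). Define the hoisted function f' on (V \ {j} → Bool) by f' σ = f (σ extended with σ j := σ i). Then the pushforward of μ under f equals the pushforward of the corresponding product measure on (V \ {j} → Bool) under f'. -/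
/-!
Let `S` fix the assignments satisfying the path condition and swap coordinates `i` and `j` on
the others. The path condition is swap-invariant and `w i = w j`, so `S` preserves the product
measure. Pointwise `f = f' ∘ restrict ∘ S`: on the path condition `f` ignores coordinate `j`,
so it may be overwritten by coordinate `i`; off it, `f' (restrict (σ ∘ swap i j))` only changes
coordinate `i` of `σ`, which `f` ignores there. Finally, restricting a product of probability
measures to the coordinates other than `j` gives the product over those coordinates.
-/

open MeasureTheory
open scoped ENNReal

namespace MeasureTheory

theorem MeasurePreserving.piecewise_id {Ω : Type*} [MeasurableSpace Ω] {μ : Measure Ω}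
    {e : Ω → Ω} (he : MeasurePreserving e μ μ) {A : Set Ω} [DecidablePred (· ∈ A)]
    (hA : MeasurableSet A) (heA : e ⁻¹' A = A) :
    MeasurePreserving (A.piecewise id e) μ μ := by
  have hm : Measurable (A.piecewise id e) := measurable_id.piecewise hA he.measurable
  refine ⟨hm, Measure.ext fun B hB => ?_⟩
  have hpre : A.piecewise id e ⁻¹' B = B ∩ A ∪ e ⁻¹' (B \ A) := by
    rw [Set.piecewise_preimage, Set.preimage_sdiff, heA]; rfl
  have hdisj : Disjoint (B ∩ A) (e ⁻¹' (B \ A)) :=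
    Set.disjoint_left.2 fun x hx hx' => hx'.2 (heA.symm ▸ hx.2 : x ∈ e ⁻¹' A)
  rw [Measure.map_apply hm hB, hpre, measure_union hdisj (he.measurable (hB.diff hA)),
    he.measure_preimage (hB.diff hA).nullMeasurableSet, measure_inter_add_sdiff B hA]

theorem measurePreserving_pi_comp_perm {ι X : Type*} [Fintype ι] [MeasurableSpace X]
    (μ : ι → Measure X) [∀ i, SigmaFinite (μ i)] (e : Equiv.Perm ι) (he : ∀ i, μ (e i) = μ i) :
    MeasurePreserving (fun σ : ι → X => σ ∘ e) (Measure.pi μ) (Measure.pi μ) := by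
  have h := measurePreserving_piCongrLeft (α := fun _ => X) μ e.symm
  have hμ : (fun i => μ (e.symm i)) = μ := funext fun i => by rw [← he, e.apply_symm_apply]
  rw [hμ] at h
  convert h using 1
  funext σ i
  simp [MeasurableEquiv.coe_piCongrLeft, Equiv.piCongrLeft_apply]

theorem measurePreserving_pi_subtype_restrict {ι : Type*} [Fintype ι] {X : ι → Type*}
    [∀ i, MeasurableSpace (X i)] (μ : ∀ i, Measure (X i)) [∀ i, IsProbabilityMeasure (μ i)]
    (p : ι → Prop) [DecidablePred p] :
    MeasurePreserving (fun (σ : ∀ i, X i) (v : Subtype p) => σ v) (Measure.pi μ)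
      (Measure.pi fun v : Subtype p => μ v) :=
  measurePreserving_fst.comp (measurePreserving_piEquivPiSubtypeProd μ p)

end MeasureTheory

open Function

section PathRedundancy

variable {V β : Type*} [DecidableEq V] {i j : V}

def extendByCopy (hij : i ≠ j) (τ : {v : V // v ≠ j} → β) (v : V) : β :=
  if h : v = j then τ ⟨i, hij⟩ else τ ⟨v, h⟩

theorem extendByCopy_restrict (hij : i ≠ j) (σ : V → β) :
    extendByCopy hij (fun v => σ v) = update σ j (σ i) := by
  funext v
  by_cases hv : v = j <;> simp [extendByCopy, hv]

theorem extendByCopy_restrict_comp_swap (hij : i ≠ j) (σ : V → β) :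
    extendByCopy hij (fun v => (σ ∘ Equiv.swap i j) v) = update σ i (σ j) := by
  rw [extendByCopy_restrict, Equiv.comp_swap_eq_update]
  simp [update_comm hij.symm, hij.symm]

theorem comp_swap_iff_of_update_iff {P : (V → β) → Prop}
    (hPi : ∀ σ b, P (update σ i b) ↔ P σ) (hPj : ∀ σ b, P (update σ j b) ↔ P σ) (σ : V → β) :
    P (σ ∘ Equiv.swap i j) ↔ P σ := by
  rw [Equiv.comp_swap_eq_update, hPi, hPj]

theorem apply_extendByCopy_restrict_piecewise {γ : Type*} (hij : i ≠ j) (f : (V → β) → γ)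
    (A : Set (V → β)) [DecidablePred (· ∈ A)]
    (hfj : ∀ σ ∈ A, ∀ b, f (update σ j b) = f σ)
    (hfi : ∀ σ ∉ A, ∀ b, f (update σ i b) = f σ) (σ : V → β) :
    f (extendByCopy hij fun v => A.piecewise id (· ∘ Equiv.swap i j) σ v) = f σ := by
  by_cases hσ : σ ∈ A
  · rw [Set.piecewise_eq_of_mem _ _ _ hσ, id, extendByCopy_restrict, hfj σ hσ]
  · rw [Set.piecewise_eq_of_notMem _ _ _ hσ, extendByCopy_restrict_comp_swap, hfi σ hσ]

end PathRedundancy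

theorem stmt_5_general {V : Type} [Fintype V] [DecidableEq V] {α : Type} [MeasurableSpace α]
    (w : V → ℝ≥0∞) (hw : ∀ v, w v ≤ 1)
    (i j : V) (hij : i ≠ j) (hwij : w i = w j)
    (f : (V → Bool) → α)
    (P : V → (V → Bool) → Prop)
    (hPi : ∀ σ b, P i (Function.update σ i b) ↔ P i σ)
    (hPj : ∀ σ b, P i (Function.update σ j b) ↔ P i σ)
    (hfj : ∀ σ, P i σ → ∀ b, f (Function.update σ j b) = f σ)
    (hfi : ∀ σ, ¬ P i σ → ∀ b, f (Function.update σ i b) = f σ) :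
    (Measure.pi fun v => (PMF.bernoulli (w v).toNNReal ((ENNReal.toNNReal_mono ENNReal.one_ne_top (hw v)).trans_eq ENNReal.toNNReal_one)).toMeasure).map f =
      (Measure.pi fun v : {v : V // v ≠ j} => (PMF.bernoulli (w v.1).toNNReal ((ENNReal.toNNReal_mono ENNReal.one_ne_top (hw v.1)).trans_eq ENNReal.toNNReal_one)).toMeasure).map
        (fun σ => f fun v => if h : v = j then σ ⟨i, hij⟩ else σ ⟨v, h⟩) := by
  classical
  set μ : V → Measure Bool := fun v => (PMF.bernoulli (w v).toNNReal ((ENNReal.toNNReal_mono ENNReal.one_ne_top (hw v)).trans_eq ENNReal.toNNReal_one)).toMeasure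
  have hμ_swap : ∀ v, μ (Equiv.swap i j v) = μ v := fun v => by
    rw [Equiv.swap_apply_def]; split_ifs <;> subst_vars <;> simp only [μ, hwij]
  set A : Set (V → Bool) := {σ | P i σ}
  have hS := (measurePreserving_pi_comp_perm μ _ hμ_swap).piecewise_id (A := A) .of_discrete
    (Set.ext fun σ => comp_swap_iff_of_update_iff hPi hPj σ)
  have hres := measurePreserving_pi_subtype_restrict μ (· ≠ j)
  calc (Measure.pi μ).map f
      = (((Measure.pi μ).map (A.piecewise id (· ∘ Equiv.swap i j))).map
          (fun σ (v : {v // v ≠ j}) => σ v)).map (f ∘ extendByCopy hij) := by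
        rw [Measure.map_map hres.measurable hS.measurable,
          Measure.map_map .of_discrete (hres.measurable.comp hS.measurable)]
        exact congrArg (Measure.map · _)
          (funext fun σ => (apply_extendByCopy_restrict_piecewise hij f A hfj hfi σ).symm)
    _ = _ := by rw [hS.map_eq, hres.map_eq]; rfl

/-- abstract Path Redundancy Theorem.  `μ` is the product Bernoulli
measure on assignments `V → Bool` with parameters `w`.  If `i ≠ j`, `w i = w j`,
and `f` never reads coordinate `j` when the path condition `P i` holds and never
reads coordinate `i` when it fails (where `P i` itself does not depend on
coordinates `i` and `j`), then the pushforward of `μ` under `f` equals the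
pushforward under the hoisted function `f'` on `(V \ {j}) → Bool` which extends
an assignment by setting coordinate `j` to the value of coordinate `i`. -/
theorem stmt_5 {V : Type} [Fintype V] [DecidableEq V] {α : Type} [MeasurableSpace α]
    (w : V → ℝ≥0∞) (hw : ∀ v, w v ≤ 1)
    (i j : V) (hij : i ≠ j) (hwij : w i = w j)
    (f : (V → Bool) → α) (hf : Measurable f)
    (P : V → (V → Bool) → Prop)
    (hPi : ∀ σ b, P i (Function.update σ i b) ↔ P i σ)
    (hPj : ∀ σ b, P i (Function.update σ j b) ↔ P i σ)
    (hfj : ∀ σ, P i σ → ∀ b, f (Function.update σ j b) = f σ)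
    (hfi : ∀ σ, ¬ P i σ → ∀ b, f (Function.update σ i b) = f σ) :
    (Measure.pi fun v => (PMF.bernoulli (w v).toNNReal ((ENNReal.toNNReal_mono ENNReal.one_ne_top (hw v)).trans_eq ENNReal.toNNReal_one)).toMeasure).map f =
      (Measure.pi fun v : {v : V // v ≠ j} => (PMF.bernoulli (w v.1).toNNReal ((ENNReal.toNNReal_mono ENNReal.one_ne_top (hw v.1)).trans_eq ENNReal.toNNReal_one)).toMeasure).map
        (fun σ => f fun v => if h : v = j then σ ⟨i, hij⟩ else σ ⟨v, h⟩) :=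
  stmt_5_general w hw i j hij hwij f P hPi hPj hfj hfi
end

section
/- Let μ be the product Bernoulli measure on σ : {1,2,3,4,5} → Bool with parameters 0.1, 0.2, 0.3, 0.2, 0.4. Define F σ = (if σ 1 then σ 2 else σ 3, if ¬σ 1 then σ 4 else σ 5). Let μ' be the product measure on σ : {1,2,3,5} → Bool with parameters 0.1, 0.2, 0.3, 0.4 and define F' σ = (if σ 1 then σ 2 else σ 3, if ¬σ 1 then σ 2 else σ 5). Then the pushforwards of F and F' coincide as distributions on Bool × Bool. -/
open MeasureTheory
open scoped ENNReal

/-- The `ℝ≥0∞`-parameter Bernoulli `PMF` of the older Mathlib (`PMF.bernoulli` now takes `ℝ≥0`). -/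
noncomputable def PMF.bernoulliENNReal (p : ℝ≥0∞) (h : p ≤ 1) : PMF Bool :=
  PMF.ofFintype (fun b => cond b p (1 - p)) (by simp [add_tsub_cancel_of_le h])

/-- Parameters `0.1, 0.2, 0.3, 0.2, 0.4` of the five flips of the original program. -/
noncomputable def v11 : Fin 5 → ℝ≥0∞ := fun i =>
  ENNReal.ofReal
    (if (i : ℕ) = 0 then 0.1 else if (i : ℕ) = 1 then 0.2 else
      if (i : ℕ) = 2 then 0.3 else if (i : ℕ) = 3 then 0.2 else 0.4)

lemma v11_le (i : Fin 5) : v11 i ≤ 1 := by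
  unfold v11; exact ENNReal.ofReal_le_one.mpr (by split_ifs <;> norm_num)

/-- Parameters `0.1, 0.2, 0.3, 0.4` of the four flips `{1, 2, 3, 5}` of the
globally hoisted program. -/
noncomputable def v11' : Fin 4 → ℝ≥0∞ := fun i =>
  ENNReal.ofReal
    (if (i : ℕ) = 0 then 0.1 else if (i : ℕ) = 1 then 0.2 else
      if (i : ℕ) = 2 then 0.3 else 0.4)

lemma v11'_le (i : Fin 4) : v11' i ≤ 1 := by
  unfold v11'; exact ENNReal.ofReal_le_one.mpr (by split_ifs <;> norm_num)

/-! On each value of the guard `σ 0` the event `F σ = (a, b)` is a box, so it has mass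
`q₀(true) q₁(a) q₄(b) + q₀(false) q₂(a) q₃(b)`. Flips 1 and 3 never lie on a common branch, so
when they have the same law the hoisted program may read flip 1 in place of flip 3 and the two
masses agree. -/

theorem preimage_program_singleton (a b : Bool) :
    (fun σ : Fin 5 → Bool => ((if σ 0 then σ 1 else σ 2), (if !σ 0 then σ 3 else σ 4))) ⁻¹' {(a, b)}
      = Set.univ.pi ![{true}, {a}, Set.univ, Set.univ, {b}]
        ∪ Set.univ.pi ![{false}, Set.univ, {a}, {b}, Set.univ] := by
  ext σ
  cases h : σ 0 <;> simp [Fin.forall_fin_succ, h]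

theorem preimage_hoistedProgram_singleton (a b : Bool) :
    (fun σ : Fin 4 → Bool => ((if σ 0 then σ 1 else σ 2), (if !σ 0 then σ 1 else σ 3))) ⁻¹' {(a, b)}
      = Set.univ.pi ![{true}, {a}, Set.univ, {b}]
        ∪ Set.univ.pi ![{false}, {b}, {a}, Set.univ] := by
  ext σ
  cases h : σ 0
  · simpa [Fin.forall_fin_succ, h] using and_comm
  · simp [Fin.forall_fin_succ, h]

theorem map_pi_eq_map_pi_hoisted (q : Fin 5 → PMF Bool) (h31 : q 3 = q 1) :
    (Measure.pi fun i => (q i).toMeasure).map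
        (fun σ : Fin 5 → Bool => ((if σ 0 then σ 1 else σ 2), (if !σ 0 then σ 3 else σ 4))) =
      (Measure.pi fun i => (![q 0, q 1, q 2, q 4] i).toMeasure).map
        (fun σ : Fin 4 → Bool => ((if σ 0 then σ 1 else σ 2), (if !σ 0 then σ 1 else σ 3))) := by
  have guards_disjoint : Disjoint ({true} : Set Bool) {false} := by simp
  refine Measure.ext_of_singleton fun ⟨a, b⟩ => ?_
  rw [Measure.map_apply (measurable_of_finite _) (measurableSet_singleton _),
    Measure.map_apply (measurable_of_finite _) (measurableSet_singleton _),
    preimage_program_singleton, preimage_hoistedProgram_singleton,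
    measure_union (Set.disjoint_univ_pi.2 ⟨0, guards_disjoint⟩) .of_discrete,
    measure_union (Set.disjoint_univ_pi.2 ⟨0, guards_disjoint⟩) .of_discrete,
    Measure.pi_pi, Measure.pi_pi, Measure.pi_pi, Measure.pi_pi]
  simp only [Fin.prod_univ_five, Fin.prod_univ_four, Matrix.cons_val_zero, Matrix.cons_val_one,
    Matrix.cons_val, measure_univ, PMF.toMeasure_apply_singleton _ _ (measurableSet_singleton _), h31]
  ring

theorem v11_three : v11 3 = v11 1 := by
  norm_num [v11]

theorem v11'_eq : v11' = ![v11 0, v11 1, v11 2, v11 4] := by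
  ext i
  fin_cases i <;> norm_num [v11, v11']

/-- the global-hoisting example.  With
`F σ = (if σ₁ then σ₂ else σ₃, if ¬σ₁ then σ₄ else σ₅)` on flips 1–5 with
parameters `0.1, 0.2, 0.3, 0.2, 0.4`, and the hoisted
`F' σ = (if σ₁ then σ₂ else σ₃, if ¬σ₁ then σ₂ else σ₅)` on flips `{1, 2, 3, 5}`
with parameters `0.1, 0.2, 0.3, 0.4`, the pushforwards coincide on `Bool × Bool`. -/
theorem stmt_11 :
    (Measure.pi fun i => (PMF.bernoulliENNReal (v11 i) (v11_le i)).toMeasure).map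
      (fun σ : Fin 5 → Bool =>
        ((if σ 0 then σ 1 else σ 2), (if !σ 0 then σ 3 else σ 4))) =
    (Measure.pi fun i => (PMF.bernoulliENNReal (v11' i) (v11'_le i)).toMeasure).map
      (fun σ : Fin 4 → Bool =>
        ((if σ 0 then σ 1 else σ 2), (if !σ 0 then σ 1 else σ 3))) := by
  have h31 : PMF.bernoulliENNReal (v11 3) (v11_le 3) = PMF.bernoulliENNReal (v11 1) (v11_le 1) := by
    simp only [v11_three]
  rw [map_pi_eq_map_pi_hoisted _ h31]
  congr 3
  ext i : 1
  fin_cases i <;> simp [v11'_eq]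
end

section
/- Let B be a Boolean function of variables x₁ < x₂ < ⋯ < xₙ (fixed variable order) represented as a reduced ordered binary decision diagram (ROBDD). Suppose g : Fin n → Fin m is a surjective relabeling that is monotone (preserving order) and B factors through the relabeling, i.e. there exists B' on m variables with B(σ) = B'(σ ∘ section) suitably. Then the number of nodes of the ROBDD of B' (as a function of m variables in the induced order) is at most the number of nodes of the ROBDD of B. In the simplest case: if B : (Fin n → Bool) → Bool does not depend on variable j, then the ROBDD of B over the n-variable order has the same node set as the ROBDD of the induced function over the (n-1)-variable order obtained by deleting j, hence size is unchanged or decreased. -/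
/-- The number of nodes of the ROBDD of a Boolean function `B` of `n` ordered
variables, counted canonically as, for each level `k`, the number of distinct
subfunctions of `B` obtained by fixing the variables below `k` that genuinely
depend on variable `k`. -/
noncomputable def robddSize {n : ℕ} (B : (Fin n → Bool) → Bool) : ℕ :=
  ∑ k : Fin n,
    {g : (Fin n → Bool) → Bool |
        (∃ τ : Fin n → Bool, g = fun σ => B fun m => if m < k then τ m else σ m) ∧
        ∃ σ b, g (Function.update σ k b) ≠ g σ}.ncard

/-- The level-`k` node set of the ROBDD. -/
def LS {n : ℕ} (B : (Fin n → Bool) → Bool) (k : Fin n) : Set ((Fin n → Bool) → Bool) :=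
  {g : (Fin n → Bool) → Bool |
      (∃ τ : Fin n → Bool, g = fun σ => B fun m => if m < k then τ m else σ m) ∧
      ∃ σ b, g (Function.update σ k b) ≠ g σ}

lemma robddSize_eq {n : ℕ} (B : (Fin n → Bool) → Bool) :
    robddSize B = ∑ k : Fin n, (LS B k).ncard := rfl

lemma precomp_update {n m : ℕ} (s : Fin m → Fin n) (hs : Function.Injective s)
    (σ : Fin n → Bool) (k' : Fin m) (b : Bool) :
    (Function.update σ (s k') b) ∘ s = Function.update (σ ∘ s) k' b := by
  funext m'
  simp only [Function.comp_apply, Function.update_apply]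
  by_cases h : m' = k'
  · subst h; simp
  · rw [if_neg h, if_neg (fun hc => h (hs hc))]

lemma LS_mapsTo {n m : ℕ} (B : (Fin n → Bool) → Bool) (B' : (Fin m → Bool) → Bool)
    (s : Fin m → Fin n) (hsm : StrictMono s) (hfact : ∀ σ, B σ = B' (σ ∘ s))
    (k' : Fin m) {g' : (Fin m → Bool) → Bool} (hg' : g' ∈ LS B' k') :
    (fun σ : Fin n → Bool => g' (σ ∘ s)) ∈ LS B (s k') := by
  obtain ⟨⟨τ', hτ⟩, σ', b, hdep⟩ := hg'
  constructor
  · refine ⟨Function.extend s τ' (fun _ => false), ?_⟩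
    funext σ
    show g' (σ ∘ s) = B _
    rw [hτ]
    show B' _ = B _
    rw [hfact]
    congr 1
    funext m'
    simp only [Function.comp_apply]
    by_cases h : m' < k'
    · rw [if_pos (hsm h), if_pos h, hsm.injective.extend_apply]
    · rw [if_neg (fun hc => h (hsm.lt_iff_lt.mp hc)), if_neg h]
  · refine ⟨Function.extend s σ' (fun _ => false), b, ?_⟩
    have h1 : (Function.extend s σ' (fun _ => false)) ∘ s = σ' := by
      funext m'; exact hsm.injective.extend_apply _ _ _
    show g' (Function.update (Function.extend s σ' (fun _ => false)) (s k') b ∘ s) ≠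
      g' ((Function.extend s σ' (fun _ => false)) ∘ s)
    rw [precomp_update s hsm.injective, h1]
    exact hdep

lemma precomp_inj {n m : ℕ} (s : Fin m → Fin n) (hs : Function.Injective s) :
    Function.Injective
      (fun (g' : (Fin m → Bool) → Bool) => fun σ : Fin n → Bool => g' (σ ∘ s)) := by
  intro g₁ g₂ h
  funext σ'
  have h2 := congrFun h (Function.extend s σ' (fun _ => false))
  have h1 : (Function.extend s σ' (fun _ => false)) ∘ s = σ' := by
    funext m'; exact hs.extend_apply _ _ _
  simpa [h1] using h2

lemma size_le {n m : ℕ} (B : (Fin n → Bool) → Bool) (B' : (Fin m → Bool) → Bool)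
    (s : Fin m → Fin n) (hsm : StrictMono s) (hfact : ∀ σ, B σ = B' (σ ∘ s)) :
    robddSize B' ≤ robddSize B := by
  rw [robddSize_eq, robddSize_eq]
  calc ∑ k' : Fin m, (LS B' k').ncard
      ≤ ∑ k' : Fin m, (LS B (s k')).ncard := by
        refine Finset.sum_le_sum fun k' _ => ?_
        exact Set.ncard_le_ncard_of_injOn _
          (fun g' hg' => LS_mapsTo B B' s hsm hfact k' hg')
          ((precomp_inj s hsm.injective).injOn) (Set.toFinite _)
    _ = ∑ k ∈ Finset.univ.image s, (LS B k).ncard := by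
        rw [Finset.sum_image (fun a _ b _ h => hsm.injective h)]
    _ ≤ ∑ k : Fin n, (LS B k).ncard :=
        Finset.sum_le_sum_of_subset (Finset.subset_univ _)

section Part2

variable {n' : ℕ} (C : (Fin (n' + 1) → Bool) → Bool) (j : Fin (n' + 1))

lemma C_indep (hC : ∀ σ b, C (Function.update σ j b) = C σ)
    {a b : Fin (n' + 1) → Bool} (h : ∀ i, i ≠ j → a i = b i) : C a = C b := by
  have hab : b = Function.update a j (b j) := by
    funext i
    by_cases hi : i = j
    · subst hi; simp
    · rw [Function.update_apply, if_neg hi, h i hi]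
  rw [hab, hC]

lemma insert_comp (σ : Fin (n' + 1) → Bool) (x : Bool) :
    ∀ i, i ≠ j → (j.insertNth x (σ ∘ j.succAbove) : Fin (n' + 1) → Bool) i = σ i := by
  intro i hi
  obtain ⟨z, rfl⟩ := Fin.exists_succAbove_eq hi
  simp [Fin.insertNth_apply_succAbove]

lemma hfact2 (hC : ∀ σ b, C (Function.update σ j b) = C σ) :
    ∀ σ, C σ = (fun τ : Fin n' → Bool => C (j.insertNth false τ)) (σ ∘ j.succAbove) := by
  intro σ
  exact (C_indep C j hC (insert_comp j σ false)).symm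

lemma LS_j_empty (hC : ∀ σ b, C (Function.update σ j b) = C σ) : LS C j = ∅ := by
  ext g
  simp only [Set.mem_empty_iff_false, iff_false]
  rintro ⟨⟨τ, hτ⟩, σ, b, hdep⟩
  apply hdep
  rw [hτ]
  show C _ = C _
  apply C_indep C j hC
  intro i hi
  by_cases h : i < j
  · simp [h]
  · simp [h, Function.update_apply, hi]

lemma LS_surj (hC : ∀ σ b, C (Function.update σ j b) = C σ) (k' : Fin n')
    {G : (Fin (n' + 1) → Bool) → Bool} (hG : G ∈ LS C (j.succAbove k')) :
    ∃ g' ∈ LS (fun τ : Fin n' → Bool => C (j.insertNth false τ)) k',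
      (fun σ : Fin (n' + 1) → Bool => g' (σ ∘ j.succAbove)) = G := by
  obtain ⟨⟨τ, hform⟩, σ₀, b₀, hdep⟩ := hG
  set sk : Fin (n' + 1) := j.succAbove k' with hsk
  have hskj : sk ≠ j := Fin.succAbove_ne j k'
  have hsm : StrictMono (j.succAbove) := Fin.strictMono_succAbove j
  have Gindep : ∀ a b : Fin (n' + 1) → Bool, (∀ i, i ≠ j → a i = b i) → G a = G b := by
    intro a b h
    rw [hform]
    show C _ = C _
    apply C_indep C j hC
    intro i hi
    by_cases hlt : i < sk
    · simp [hlt]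
    · simp [hlt, h i hi]
  refine ⟨fun τ'' => G (j.insertNth false τ''), ⟨?_, ?_⟩, ?_⟩
  · refine ⟨τ ∘ j.succAbove, ?_⟩
    funext τ''
    show G (j.insertNth false τ'') =
      C (j.insertNth false (fun m => if m < k' then (τ ∘ j.succAbove) m else τ'' m))
    rw [hform]
    show C _ = C _
    apply C_indep C j hC
    intro i hi
    obtain ⟨z, rfl⟩ := Fin.exists_succAbove_eq hi
    simp only [Fin.insertNth_apply_succAbove, Function.comp_apply]
    by_cases h : z < k'
    · rw [if_pos (hsm h), if_pos h]
    · rw [if_neg (fun hc => h (hsm.lt_iff_lt.mp hc)), if_neg h]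
  · refine ⟨σ₀ ∘ j.succAbove, b₀, ?_⟩
    show G (j.insertNth false (Function.update (σ₀ ∘ j.succAbove) k' b₀)) ≠
      G (j.insertNth false (σ₀ ∘ j.succAbove))
    have e1 : (j.insertNth false (Function.update (σ₀ ∘ j.succAbove) k' b₀) :
        Fin (n' + 1) → Bool) =
        Function.update (j.insertNth false (σ₀ ∘ j.succAbove)) sk b₀ := by
      funext i
      by_cases hi : i = j
      · subst hi
        rw [Function.update_apply, if_neg (Ne.symm hskj)]
        simp
      · obtain ⟨z, rfl⟩ := Fin.exists_succAbove_eq hi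
        rw [Fin.insertNth_apply_succAbove, Function.update_apply, Function.update_apply,
          Fin.insertNth_apply_succAbove]
        by_cases h : z = k'
        · subst h; simp [hsk]
        · rw [if_neg h, if_neg (fun hc => h (hsm.injective hc))]
    rw [e1]
    have e2 : G (Function.update (j.insertNth false (σ₀ ∘ j.succAbove)) sk b₀) =
        G (Function.update σ₀ sk b₀) := by
      apply Gindep
      intro i hi
      rw [Function.update_apply, Function.update_apply]
      by_cases h : i = sk
      · simp [h]
      · rw [if_neg h, if_neg h, insert_comp j σ₀ false i hi]
    have e3 : G (j.insertNth false (σ₀ ∘ j.succAbove)) = G σ₀ :=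
      Gindep _ _ (insert_comp j σ₀ false)
    rw [e2, e3]
    exact hdep
  · funext σ
    exact Gindep _ _ (insert_comp j σ false)

end Part2

/-- order-preserving variable identification never increases
ROBDD size.  If `g : Fin n → Fin m` is a monotone surjective relabeling with a
section `s`, and `B` factors through the relabeling as `B σ = B' (σ ∘ s)`, then
the ROBDD of `B'` (in the induced order) has at most as many nodes as the ROBDD
of `B`.  In the simplest case, if `C` does not depend on variable `j`, the
ROBDD of the induced function on the remaining variables (deleting `j`) has
exactly the same size as the ROBDD of `C`. -/
theorem stmt_17 {n m : ℕ} (B : (Fin n → Bool) → Bool) (B' : (Fin m → Bool) → Bool)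
    (g : Fin n → Fin m) (hsurj : Function.Surjective g) (hmono : Monotone g)
    (s : Fin m → Fin n) (hs : ∀ k, g (s k) = k)
    (hfact : ∀ σ, B σ = B' (σ ∘ s)) :
    robddSize B' ≤ robddSize B ∧
      ∀ (n' : ℕ) (C : (Fin (n' + 1) → Bool) → Bool) (j : Fin (n' + 1)),
        (∀ σ b, C (Function.update σ j b) = C σ) →
        robddSize (fun τ : Fin n' → Bool => C (j.insertNth false τ)) = robddSize C := by
  constructor
  · have hsm : StrictMono s := by
      intro a b hab
      rcases lt_or_ge (s a) (s b) with h | h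
      · exact h
      · have h2 := hmono h
        rw [hs, hs] at h2
        exact absurd (lt_of_lt_of_le hab h2) (lt_irrefl _)
    exact size_le B B' s hsm hfact
  · intro n' C j hC
    set D := fun τ : Fin n' → Bool => C (j.insertNth false τ) with hD
    have hsm : StrictMono (j.succAbove) := Fin.strictMono_succAbove j
    have hlevel : ∀ k' : Fin n', (LS C (j.succAbove k')).ncard = (LS D k').ncard := by
      intro k'
      have himg : LS C (j.succAbove k') =
          (fun (g' : (Fin n' → Bool) → Bool) => fun σ : Fin (n' + 1) → Bool =>
            g' (σ ∘ j.succAbove)) '' (LS D k') := by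
        apply Set.Subset.antisymm
        · intro G hG
          obtain ⟨g', hg', hΦ⟩ := LS_surj C j hC k' hG
          exact ⟨g', hg', hΦ⟩
        · rintro _ ⟨g', hg', rfl⟩
          exact LS_mapsTo C D (j.succAbove) hsm (hfact2 C j hC) k' hg'
      rw [himg, Set.ncard_image_of_injective _ (precomp_inj _ hsm.injective)]
    rw [robddSize_eq, robddSize_eq, Fin.sum_univ_succAbove (fun k => (LS C k).ncard) j,
      LS_j_empty C j hC]
    simp only [Set.ncard_empty, zero_add]
    exact Finset.sum_congr rfl fun k' _ => (hlevel k').symm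
end
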